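/- arXiv:2202.11266 — 6 statements merged into one kernel-verified Lean document; each statement's English description precedes it below -/
import Mathlib

section
/- For a, b > 0 and ζ ∈ (0,1), if a ≥ 2b(ln(4/ζ) + ln(1 + 1/b)), then a ≥ b · ln(1/(ζa)). -/
theorem a_ge_b_log (a b ζ : ℝ) (ha : 0 < a) (hb : 0 < b)
    (hζ : ζ ∈ Set.Ioo (0 : ℝ) 1)
    (h : a ≥ 2 * b * (Real.log (4 / ζ) + Real.log (1 + 1 / b))) :
    a ≥ b * Real.log (1 / (ζ * a)) := by
  obtain ⟨hζ0, hζ1⟩ := hζ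
  set L : ℝ := Real.log (4 / ζ) + Real.log (1 + 1 / b) with hLdef
  have h4ζ : (4 : ℝ) ≤ 4 / ζ := by
    rw [le_div_iff₀ hζ0]; nlinarith
  have hlog4 : (1 : ℝ) ≤ Real.log (4 / ζ) := by
    rw [Real.le_log_iff_exp_le (by positivity)]
    calc Real.exp 1 ≤ 2.7182818286 := Real.exp_one_lt_d9.le
      _ ≤ 4 := by norm_num
      _ ≤ 4 / ζ := h4ζ
  have hlogb : (0 : ℝ) ≤ Real.log (1 + 1 / b) := by
    apply Real.log_nonneg; nlinarith [one_div_pos.mpr hb]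
  have hL1 : (1 : ℝ) ≤ L := by rw [hLdef]; linarith
  have hL0 : (0 : ℝ) < L := by linarith
  have ha0 : (0 : ℝ) < 2 * b * L := by positivity
  have hexpL : Real.exp L = (4 / ζ) * (1 + 1 / b) := by
    rw [hLdef, Real.exp_add, Real.exp_log (by positivity), Real.exp_log (by positivity)]
  have key : Real.log (1 / (ζ * (2 * b * L))) ≤ 2 * L := by
    have hexp2 : Real.exp (2 * L) = (4 / ζ * (1 + 1 / b)) ^ 2 := by
      rw [two_mul, Real.exp_add, hexpL]; ring
    rw [Real.log_le_iff_le_exp (by positivity), hexp2]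
    rw [div_le_iff₀ (by positivity)]
    have hb1 : (4 : ℝ) ≤ b * (1 + 1 / b) ^ 2 := by
      have : b * (1 + 1 / b) ^ 2 = (b + 1) ^ 2 / b := by field_simp
      rw [this, le_div_iff₀ hb]; nlinarith [sq_nonneg (b - 1)]
    have expand : (4 / ζ * (1 + 1 / b)) ^ 2 * (ζ * (2 * b * L))
        = (32 * (b * (1 + 1 / b) ^ 2) * L) / ζ := by field_simp; ring
    rw [expand, le_div_iff₀ hζ0]
    nlinarith
  have mono : Real.log (1 / (ζ * a)) ≤ Real.log (1 / (ζ * (2 * b * L))) := by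
    apply Real.log_le_log (by positivity)
    apply one_div_le_one_div_of_le (by positivity)
    exact mul_le_mul_of_nonneg_left h hζ0.le
  calc b * Real.log (1 / (ζ * a)) ≤ b * (2 * L) :=
        mul_le_mul_of_nonneg_left (mono.trans key) hb.le
    _ = 2 * b * L := by ring
    _ ≤ a := h
end

section
/- Fix ψ ∈ (0, π/2) and d ≥ 3. Define F_φ(θ) = (1 - cos²φ / cos²θ)^((d-2)/2) for θ ∈ [0, φ]. Then the function Π(φ) = (∫_0^{ψ/2} F_φ(θ) dθ) / (∫_0^φ F_φ(θ) dθ), defined for φ ∈ [ψ/2, π/2), is monotonically decreasing in φ. -/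
open Real

private lemma intable (c p a b : ℝ) (hp : 0 ≤ p)
    (h : ∀ θ ∈ Set.uIcc a b, cos θ ≠ 0) :
    IntervalIntegrable (fun θ => (1 - c / cos θ ^ 2) ^ p) MeasureTheory.volume a b := by
  apply ContinuousOn.intervalIntegrable
  apply ContinuousOn.rpow_const
  · exact continuousOn_const.sub (continuousOn_const.div
      ((Real.continuous_cos.continuousOn).pow 2) (fun θ hθ => pow_ne_zero 2 (h θ hθ)))
  · exact fun x _ => Or.inr hp

private lemma key_le (p t A c1 c2 : ℝ) (hp : 0 ≤ p) (ht : 0 < t) (hA : c1 < A)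
    (hc : c2 ≤ c1) (hAt : A ≤ t) :
    (1 - c2 / t) ^ p ≤ ((A - c2) / (A - c1)) ^ p * (1 - c1 / t) ^ p := by
  have hA1 : (0:ℝ) < A - c1 := by linarith
  have hK : (0:ℝ) ≤ (A - c2) / (A - c1) := div_nonneg (by linarith) hA1.le
  have h1t : (0:ℝ) ≤ 1 - c1 / t := by
    rw [sub_nonneg, div_le_one ht]; linarith
  rw [← Real.mul_rpow hK h1t]
  apply Real.rpow_le_rpow _ _ hp
  · rw [sub_nonneg, div_le_one ht]; linarith
  · rw [div_mul_eq_mul_div, le_div_iff₀ hA1, ← sub_nonpos]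
    have e : (1 - c2 / t) * (A - c1) - (A - c2) * (1 - c1 / t)
        = (c1 - c2) * (A - t) / t := by field_simp; ring
    rw [e]
    apply div_nonpos_of_nonpos_of_nonneg _ ht.le
    exact mul_nonpos_of_nonneg_of_nonpos (by linarith) (by linarith)

private lemma key_ge (p t A c1 c2 : ℝ) (hp : 0 ≤ p) (ht : 0 < t) (hA : c1 < A)
    (hc : c2 ≤ c1) (htA : t ≤ A) (hc1t : c1 ≤ t) :
    ((A - c2) / (A - c1)) ^ p * (1 - c1 / t) ^ p ≤ (1 - c2 / t) ^ p := by
  have hA1 : (0:ℝ) < A - c1 := by linarith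
  have hK : (0:ℝ) ≤ (A - c2) / (A - c1) := div_nonneg (by linarith) hA1.le
  have h1t : (0:ℝ) ≤ 1 - c1 / t := by
    rw [sub_nonneg, div_le_one ht]; linarith
  rw [← Real.mul_rpow hK h1t]
  apply Real.rpow_le_rpow (by positivity) _ hp
  rw [div_mul_eq_mul_div, div_le_iff₀ hA1]
  have key : (A - c2) * (1 - c1 / t) ≤ (1 - c2 / t) * (A - c1) := by
    rw [← sub_nonneg]
    have e : (1 - c2 / t) * (A - c1) - (A - c2) * (1 - c1 / t)
        = (c1 - c2) * (A - t) / t := by field_simp; ring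
    rw [e]
    exact div_nonneg (mul_nonneg (by linarith) (by linarith)) ht.le
  exact key

set_option maxHeartbeats 1000000 in
theorem Pi_antitone (ψ : ℝ) (hψ : ψ ∈ Set.Ioo 0 (π/2)) (d : ℕ) (hd : 3 ≤ d) :
    AntitoneOn
      (fun φ : ℝ =>
        (∫ θ in (0:ℝ)..(ψ/2), (1 - cos φ ^ 2 / cos θ ^ 2) ^ (((d:ℝ) - 2) / 2)) /
        (∫ θ in (0:ℝ)..φ, (1 - cos φ ^ 2 / cos θ ^ 2) ^ (((d:ℝ) - 2) / 2)))
      (Set.Ico (ψ/2) (π/2)) := by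
  obtain ⟨hψ0, hψπ⟩ := hψ
  intro φ1 hφ1 φ2 hφ2 h12
  obtain ⟨ha1, hb1⟩ := hφ1
  obtain ⟨ha2, hb2⟩ := hφ2
  simp only
  set p : ℝ := ((d:ℝ) - 2) / 2 with hp_def
  have hd3 : (3:ℝ) ≤ (d:ℝ) := by exact_mod_cast hd
  have hp : 0 < p := by rw [hp_def]; linarith
  have hψ2 : 0 < ψ / 2 := by linarith
  have hψ2π : ψ / 2 < π / 2 := by linarith
  have hπ : 0 < π := Real.pi_pos
  have hcos2 : 0 < cos φ2 := Real.cos_pos_of_mem_Ioo ⟨by linarith, hb2⟩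
  have hcos1 : 0 < cos φ1 := Real.cos_pos_of_mem_Ioo ⟨by linarith, by linarith⟩
  have hcosψ : 0 < cos (ψ/2) := Real.cos_pos_of_mem_Ioo ⟨by linarith, hψ2π⟩
  have hcospos : ∀ θ ∈ Set.Icc (0:ℝ) φ2, 0 < cos θ := fun θ hθ =>
    Real.cos_pos_of_mem_Ioo ⟨by linarith [hθ.1], by linarith [hθ.2]⟩
  have hcosne : ∀ a b : ℝ, 0 ≤ a → b ≤ φ2 → a ≤ b →
      ∀ θ ∈ Set.uIcc a b, cos θ ≠ 0 := by
    intro a b ha hb hab θ hθ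
    rw [Set.uIcc_of_le hab] at hθ
    exact (hcospos θ ⟨by linarith [hθ.1], by linarith [hθ.2]⟩).ne'
  set c1 : ℝ := cos φ1 ^ 2 with hc1_def
  set c2 : ℝ := cos φ2 ^ 2 with hc2_def
  set A : ℝ := cos (ψ/2) ^ 2 with hA_def
  have hc21 : c2 ≤ c1 := by
    apply pow_le_pow_left₀ hcos2.le
    exact Real.cos_le_cos_of_nonneg_of_le_pi (by linarith) (by linarith) h12
  have hc1A : c1 ≤ A := by
    apply pow_le_pow_left₀ hcos1.le
    exact Real.cos_le_cos_of_nonneg_of_le_pi (by linarith) (by linarith) ha1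
  have htpos : ∀ θ ∈ Set.Icc (0:ℝ) φ2, 0 < cos θ ^ 2 := fun θ hθ =>
    pow_pos (hcospos θ hθ) 2
  have htA_left : ∀ θ ∈ Set.Icc (0:ℝ) (ψ/2), A ≤ cos θ ^ 2 := by
    intro θ hθ
    apply pow_le_pow_left₀ hcosψ.le
    exact Real.cos_le_cos_of_nonneg_of_le_pi hθ.1 (by linarith) hθ.2
  have htA_strict : ∀ θ ∈ Set.Ioo (0:ℝ) (ψ/2), A < cos θ ^ 2 := by
    intro θ hθ
    apply pow_lt_pow_left₀ _ hcosψ.le (by norm_num)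
    exact Real.strictAntiOn_cos ⟨hθ.1.le, by linarith [hθ.2]⟩
      ⟨by linarith, by linarith⟩ hθ.2
  have hFnn : ∀ c θ, c ≤ cos θ ^ 2 → 0 < cos θ ^ 2 → 0 ≤ (1 - c / cos θ ^ 2) ^ p := by
    intro c θ h1 h2
    apply Real.rpow_nonneg
    rw [sub_nonneg, div_le_one h2]; exact h1
  have hi1N : IntervalIntegrable (fun θ => (1 - c1 / cos θ ^ 2) ^ p)
      MeasureTheory.volume 0 (ψ/2) := intable c1 p 0 (ψ/2) hp.le
      (hcosne 0 (ψ/2) le_rfl (by linarith) (by linarith))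
  have hi1R : IntervalIntegrable (fun θ => (1 - c1 / cos θ ^ 2) ^ p)
      MeasureTheory.volume (ψ/2) φ1 := intable c1 p (ψ/2) φ1 hp.le
      (hcosne (ψ/2) φ1 hψ2.le (by linarith) ha1)
  have hi2N : IntervalIntegrable (fun θ => (1 - c2 / cos θ ^ 2) ^ p)
      MeasureTheory.volume 0 (ψ/2) := intable c2 p 0 (ψ/2) hp.le
      (hcosne 0 (ψ/2) le_rfl (by linarith) (by linarith))
  have hi2R1 : IntervalIntegrable (fun θ => (1 - c2 / cos θ ^ 2) ^ p)
      MeasureTheory.volume (ψ/2) φ1 := intable c2 p (ψ/2) φ1 hp.le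
      (hcosne (ψ/2) φ1 hψ2.le (by linarith) ha1)
  have hi2R2 : IntervalIntegrable (fun θ => (1 - c2 / cos θ ^ 2) ^ p)
      MeasureTheory.volume φ1 φ2 := intable c2 p φ1 φ2 hp.le
      (hcosne φ1 φ2 (by linarith) le_rfl h12)
  have hi2R : IntervalIntegrable (fun θ => (1 - c2 / cos θ ^ 2) ^ p)
      MeasureTheory.volume (ψ/2) φ2 := hi2R1.trans hi2R2
  set N1 : ℝ := ∫ θ in (0:ℝ)..(ψ/2), (1 - c1 / cos θ ^ 2) ^ p with hN1
  set N2 : ℝ := ∫ θ in (0:ℝ)..(ψ/2), (1 - c2 / cos θ ^ 2) ^ p with hN2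
  set R1 : ℝ := ∫ θ in (ψ/2)..φ1, (1 - c1 / cos θ ^ 2) ^ p with hR1
  set R2 : ℝ := ∫ θ in (ψ/2)..φ2, (1 - c2 / cos θ ^ 2) ^ p with hR2
  have hD1 : (∫ θ in (0:ℝ)..φ1, (1 - c1 / cos θ ^ 2) ^ p) = N1 + R1 :=
    (intervalIntegral.integral_add_adjacent_intervals hi1N hi1R).symm
  have hD2 : (∫ θ in (0:ℝ)..φ2, (1 - c2 / cos θ ^ 2) ^ p) = N2 + R2 :=
    (intervalIntegral.integral_add_adjacent_intervals hi2N hi2R).symm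
  rw [hD1, hD2]
  have hNpos : ∀ c : ℝ, c ≤ A → ∀ hint : IntervalIntegrable
      (fun θ => (1 - c / cos θ ^ 2) ^ p) MeasureTheory.volume 0 (ψ/2),
      0 < ∫ θ in (0:ℝ)..(ψ/2), (1 - c / cos θ ^ 2) ^ p := by
    intro c hc hint
    apply intervalIntegral.intervalIntegral_pos_of_pos_on hint _ hψ2
    intro θ hθ
    apply Real.rpow_pos_of_pos
    have ht : 0 < cos θ ^ 2 := htpos θ ⟨hθ.1.le, by linarith [hθ.2]⟩
    have hAt : A < cos θ ^ 2 := htA_strict θ hθ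
    rw [sub_pos, div_lt_one ht]
    linarith
  have hN1pos : 0 < N1 := hNpos c1 hc1A hi1N
  have hN2pos : 0 < N2 := hNpos c2 (hc21.trans hc1A) hi2N
  have hR1nn : 0 ≤ R1 := by
    apply intervalIntegral.integral_nonneg ha1
    intro θ hθ
    apply hFnn c1 θ _ (htpos θ ⟨by linarith [hθ.1], by linarith [hθ.2]⟩)
    apply pow_le_pow_left₀ hcos1.le
    exact Real.cos_le_cos_of_nonneg_of_le_pi (by linarith [hθ.1]) (by linarith) hθ.2
  have hR2nn : 0 ≤ R2 := by
    apply intervalIntegral.integral_nonneg (by linarith)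
    intro θ hθ
    apply hFnn c2 θ _ (htpos θ ⟨by linarith [hθ.1], hθ.2⟩)
    apply pow_le_pow_left₀ hcos2.le
    exact Real.cos_le_cos_of_nonneg_of_le_pi (by linarith [hθ.1]) (by linarith) hθ.2
  rcases eq_or_lt_of_le ha1 with heq | hlt
  · -- φ1 = ψ/2
    have hR1z : R1 = 0 := by rw [hR1, ← heq, intervalIntegral.integral_same]
    rw [hR1z, add_zero, div_self hN1pos.ne']
    exact div_le_one_of_le₀ (by linarith) (by linarith)
  · -- ψ/2 < φ1
    have hc1A' : c1 < A := by
      apply pow_lt_pow_left₀ _ hcos1.le (by norm_num)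
      exact Real.strictAntiOn_cos ⟨by linarith, by linarith⟩ ⟨by linarith, by linarith⟩ hlt
    set K : ℝ := ((A - c2) / (A - c1)) ^ p with hK_def
    have hKnn : 0 ≤ K := Real.rpow_nonneg
      (div_nonneg (by linarith) (by linarith)) p
    have hN2K : N2 ≤ K * N1 := by
      rw [hN1, hN2, ← intervalIntegral.integral_const_mul]
      apply intervalIntegral.integral_mono_on (by linarith) hi2N (hi1N.const_mul K)
      intro θ hθ
      have ht : 0 < cos θ ^ 2 := htpos θ ⟨hθ.1, by linarith [hθ.2]⟩
      have hKmul : K * (1 - c1 / cos θ ^ 2) ^ p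
          = ((A - c2) / (A - c1)) ^ p * (1 - c1 / cos θ ^ 2) ^ p := rfl
      rw [hKmul]
      exact key_le p _ A c1 c2 hp.le ht hc1A' hc21 (htA_left θ hθ)
    have hKR1 : K * R1 ≤ ∫ θ in (ψ/2)..φ1, (1 - c2 / cos θ ^ 2) ^ p := by
      rw [hR1, ← intervalIntegral.integral_const_mul]
      apply intervalIntegral.integral_mono_on (by linarith) (hi1R.const_mul K) hi2R1
      intro θ hθ
      obtain ⟨hθ1, hθ2⟩ := hθ
      have ht : 0 < cos θ ^ 2 := htpos θ ⟨by linarith, by linarith⟩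
      have htA : cos θ ^ 2 ≤ A := by
        apply pow_le_pow_left₀ (hcospos θ ⟨by linarith, by linarith⟩).le
        exact Real.cos_le_cos_of_nonneg_of_le_pi (by linarith) (by linarith) hθ1
      have hc1t : c1 ≤ cos θ ^ 2 := by
        apply pow_le_pow_left₀ hcos1.le
        exact Real.cos_le_cos_of_nonneg_of_le_pi (by linarith) (by linarith) hθ2
      exact key_ge p _ A c1 c2 hp.le ht hc1A' hc21 htA hc1t
    have hR2split : R2 = (∫ θ in (ψ/2)..φ1, (1 - c2 / cos θ ^ 2) ^ p)
        + ∫ θ in φ1..φ2, (1 - c2 / cos θ ^ 2) ^ p :=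
      (intervalIntegral.integral_add_adjacent_intervals hi2R1 hi2R2).symm
    have htail : 0 ≤ ∫ θ in φ1..φ2, (1 - c2 / cos θ ^ 2) ^ p := by
      apply intervalIntegral.integral_nonneg h12
      intro θ hθ
      apply hFnn c2 θ _ (htpos θ ⟨by linarith [hθ.1], hθ.2⟩)
      apply pow_le_pow_left₀ hcos2.le
      exact Real.cos_le_cos_of_nonneg_of_le_pi (by linarith [hθ.1]) (by linarith) hθ.2
    have hKR2 : K * R1 ≤ R2 := by
      rw [hR2split] at *
      linarith
    rw [div_le_div_iff₀ (by linarith) (by linarith)]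
    nlinarith [mul_le_mul_of_nonneg_right hN2K hR1nn,
      mul_le_mul_of_nonneg_left hKR2 hN1pos.le]
end

section
/- Let w* be a unit vector in ℝ^d, d ≥ 2, and let α ∈ [0,1). Let E_α = {x ∈ ℝ^d : ‖x‖ = 1, |⟨w*, x⟩| > α}. Then for a unit vector w ∈ ℝ^d, we have sign(⟨w, x⟩) = sign(⟨w*, x⟩) for all x ∈ E_α if and only if ⟨w, w*⟩ ≥ √(1 - α²). -/
open scoped RealInnerProductSpace

noncomputable def sgn (a : ℝ) : ℝ := if 0 ≤ a then 1 else -1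

lemma sgn_of_pos {a : ℝ} (h : 0 < a) : sgn a = 1 := if_pos h.le

lemma sgn_of_neg {a : ℝ} (h : a < 0) : sgn a = -1 := if_neg (not_le.mpr h)

set_option maxHeartbeats 4000000 in
theorem version_space_characterization (d : ℕ) (hd : 2 ≤ d)
    (wstar : EuclideanSpace ℝ (Fin d)) (hws : ‖wstar‖ = 1)
    (α : ℝ) (hα : α ∈ Set.Ico (0 : ℝ) 1)
    (w : EuclideanSpace ℝ (Fin d)) (hw : ‖w‖ = 1) :
    (∀ x : EuclideanSpace ℝ (Fin d), ‖x‖ = 1 → |⟪wstar, x⟫| > α →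
        sgn ⟪w, x⟫ = sgn ⟪wstar, x⟫) ↔
      ⟪w, wstar⟫ ≥ Real.sqrt (1 - α ^ 2) := by
  obtain ⟨hα0, hα1⟩ := hα
  set c := ⟪w, wstar⟫ with hcdef
  have hws2 : ⟪wstar, wstar⟫ = 1 := by
    rw [real_inner_self_eq_norm_sq, hws]; norm_num
  have hw2 : ⟪w, w⟫ = 1 := by
    rw [real_inner_self_eq_norm_sq, hw]; norm_num
  have hwsw : ⟪wstar, w⟫ = c := (real_inner_comm wstar w).symm
  have hsq : (0:ℝ) < 1 - α ^ 2 := by nlinarith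
  constructor
  · -- forward: version space condition implies large inner product
    intro h
    by_contra hcon
    push_neg at hcon
    rcases lt_or_ge c 0 with hc0 | hc0
    · -- c < 0 : test with x = wstar
      have h1 := h wstar hws (by rw [hws2]; rw [abs_one]; exact hα1)
      rw [hws2, ← hcdef, sgn_of_neg hc0, sgn_of_pos one_pos] at h1
      norm_num at h1
    · -- 0 ≤ c < √(1-α²)
      have hc1 : c ^ 2 < 1 - α ^ 2 := by
        nlinarith [Real.sq_sqrt hsq.le, Real.sqrt_nonneg (1 - α ^ 2)]
      set s := Real.sqrt (1 - c ^ 2) with hsdef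
      have hs2 : s ^ 2 = 1 - c ^ 2 := Real.sq_sqrt (by nlinarith)
      have hsnn : 0 ≤ s := Real.sqrt_nonneg _
      have hsα : α < s := by nlinarith
      have hs0 : 0 < s := lt_of_le_of_lt hα0 hsα
      have hs1 : s ≤ 1 := by nlinarith
      set t := (α + s) / 2 with htdef
      have htα : α < t := by rw [htdef]; linarith
      have hts : t < s := by rw [htdef]; linarith
      have ht0 : 0 < t := lt_of_le_of_lt hα0 htα
      have ht1 : t < 1 := lt_of_lt_of_le hts hs1
      set r := Real.sqrt (1 - t ^ 2) with hrdef
      have hr2 : r ^ 2 = 1 - t ^ 2 := Real.sq_sqrt (by nlinarith)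
      have hr0 : 0 < r := Real.sqrt_pos.mpr (by nlinarith)
      set u : EuclideanSpace ℝ (Fin d) := s⁻¹ • (w - c • wstar) with hu
      have hwsu : ⟪wstar, u⟫ = 0 := by
        rw [hu, real_inner_smul_right, inner_sub_right, real_inner_smul_right,
          hwsw, hws2]
        ring
      have hcc : 1 - c * c = s * s := by nlinarith
      have hwu : ⟪w, u⟫ = s := by
        rw [hu, real_inner_smul_right, inner_sub_right, real_inner_smul_right,
          hw2, ← hcdef, hcc]
        field_simp
      have hyy : ⟪w - c • wstar, w - c • wstar⟫ = s * s := by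
        rw [inner_sub_left, inner_sub_right, inner_sub_right,
          real_inner_smul_left, real_inner_smul_left, real_inner_smul_right,
          real_inner_smul_right, hw2, hws2, hwsw, ← hcdef]
        nlinarith
      have huu : ⟪u, u⟫ = 1 := by
        rw [hu, real_inner_smul_left, real_inner_smul_right, hyy]
        field_simp
      set x : EuclideanSpace ℝ (Fin d) := t • wstar - r • u with hx
      have hx1 : ⟪wstar, x⟫ = t := by
        rw [hx, inner_sub_right, real_inner_smul_right, real_inner_smul_right,
          hws2, hwsu]
        ring
      have hx2 : ⟪w, x⟫ = t * c - r * s := by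
        rw [hx, inner_sub_right, real_inner_smul_right, real_inner_smul_right,
          ← hcdef, hwu]
      have hxx : ⟪x, x⟫ = 1 := by
        have husw : ⟪u, wstar⟫ = 0 := by
          rw [← real_inner_comm u wstar]; exact hwsu
        simp only [hx, inner_sub_left, inner_sub_right, real_inner_smul_left,
          real_inner_smul_right, hws2, hwsu, husw, huu]
        nlinarith
      have hxn : ‖x‖ = 1 := by
        have h2 : ‖x‖ ^ 2 = 1 := by rw [← real_inner_self_eq_norm_sq]; exact hxx
        have := congrArg Real.sqrt h2
        rwa [Real.sqrt_sq (norm_nonneg x), Real.sqrt_one] at this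
      have hneg : t * c - r * s < 0 := by
        have hlt : t * c < r * s := by
          refine lt_of_pow_lt_pow_left₀ 2 (by positivity) ?_
          have hts2 : t ^ 2 < s ^ 2 := by nlinarith
          nlinarith
        linarith
      have h1 := h x hxn (by rw [hx1, abs_of_pos ht0]; exact htα)
      rw [hx1, hx2, sgn_of_pos ht0, sgn_of_neg hneg] at h1
      norm_num at h1
  · -- backward
    intro hc x hx ht
    have hc0 : 0 < c := lt_of_lt_of_le (Real.sqrt_pos.mpr hsq) hc
    have hc2 : 1 - α ^ 2 ≤ c ^ 2 := by
      nlinarith [Real.sq_sqrt hsq.le, Real.sqrt_nonneg (1 - α ^ 2)]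
    set t := ⟪wstar, x⟫ with htdef
    have hxw : ⟪x, wstar⟫ = t := by
      rw [← real_inner_comm x wstar]
    have hxself : ⟪x, x⟫ = 1 := by
      rw [real_inner_self_eq_norm_sq, hx]; norm_num
    set A : EuclideanSpace ℝ (Fin d) := w - c • wstar with hA
    set B : EuclideanSpace ℝ (Fin d) := x - t • wstar with hB
    have hA2 : ‖A‖ ^ 2 = 1 - c ^ 2 := by
      rw [← real_inner_self_eq_norm_sq, hA]
      simp only [inner_sub_left, inner_sub_right, real_inner_smul_left,
        real_inner_smul_right, hw2, hws2, hwsw, ← hcdef]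
      ring
    have hB2 : ‖B‖ ^ 2 = 1 - t ^ 2 := by
      rw [← real_inner_self_eq_norm_sq, hB]
      simp only [inner_sub_left, inner_sub_right, real_inner_smul_left,
        real_inner_smul_right, hxself, hws2, hxw, ← htdef]
      ring
    have hAB : ⟪A, B⟫ = ⟪w, x⟫ - c * t := by
      rw [hA, hB]
      simp only [inner_sub_left, inner_sub_right, real_inner_smul_left,
        real_inner_smul_right, hws2, hxw, ← hcdef, ← htdef]
      ring
    have ht2 : α ^ 2 < t ^ 2 := by nlinarith [sq_abs t, abs_nonneg t]
    have cauchy : |⟪A, B⟫| ≤ ‖A‖ * ‖B‖ := abs_real_inner_le_norm A B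
    have hlt : ‖A‖ * ‖B‖ < c * |t| := by
      refine lt_of_pow_lt_pow_left₀ 2 (by positivity) ?_
      rw [mul_pow, mul_pow, hA2, hB2, sq_abs]
      nlinarith
    have hfin : |⟪w, x⟫ - c * t| < c * |t| := by
      rw [← hAB]; exact lt_of_le_of_lt cauchy hlt
    have htne : t ≠ 0 := by
      intro h0
      rw [h0] at ht
      simp at ht
      linarith
    rcases lt_or_gt_of_ne htne with htneg | htpos
    · have habs : |t| = -t := abs_of_neg htneg
      rw [habs] at hfin
      have h1 : ⟪w, x⟫ < 0 := by
        have := (abs_lt.mp hfin).2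
        nlinarith
      rw [sgn_of_neg h1, sgn_of_neg htneg]
    · have habs : |t| = t := abs_of_pos htpos
      rw [habs] at hfin
      have h1 : 0 < ⟪w, x⟫ := by
        have := (abs_lt.mp hfin).1
        nlinarith
      rw [sgn_of_pos h1, sgn_of_pos htpos]
end

section
/- Let w* = (1, 0) ∈ ℝ², let α ∈ [0,1), and let γ = arccos α ∈ (0, π/2]. For a unit vector w ∈ ℝ² with polar angle φ(w) ∈ (-π, π] measured from (1,0), the classifier x ↦ sign(⟨w, x⟩) agrees with x ↦ sign(x₁) on all unit vectors x with |x₁| > α if and only if φ(w) ∈ [-(π/2 - γ), π/2 - γ]. -/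
lemma aux_phi (α ψ : ℝ) (hα0 : 0 ≤ α) (hα1 : α < 1)
    (h1 : Real.arcsin α < ψ) (h2 : ψ ≤ Real.pi) :
    ∃ t : ℝ, α < Real.sin t ∧ Real.sin (t - ψ) < 0 := by
  have hA0 : 0 ≤ Real.arcsin α := Real.arcsin_nonneg.2 hα0
  have hA2 : Real.arcsin α < Real.pi / 2 := Real.arcsin_lt_pi_div_two.2 hα1
  have hpi := Real.pi_pos
  set A := Real.arcsin α with hA
  refine ⟨min ((A + ψ)/2) (Real.pi/2), ?_, ?_⟩
  · have hAt : A < min ((A + ψ)/2) (Real.pi/2) := lt_min (by linarith) hA2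
    have ht2 : min ((A + ψ)/2) (Real.pi/2) ≤ Real.pi/2 := min_le_right _ _
    calc α = Real.sin A := (Real.sin_arcsin (by linarith) hα1.le).symm
      _ < Real.sin _ := Real.strictMonoOn_sin ⟨by linarith, hA2.le⟩
          ⟨by linarith, ht2⟩ hAt
  · apply Real.sin_neg_of_neg_of_neg_pi_lt
    · have : min ((A + ψ)/2) (Real.pi/2) ≤ (A + ψ)/2 := min_le_left _ _
      linarith
    · have hAt : A < min ((A + ψ)/2) (Real.pi/2) := lt_min (by linarith) hA2
      linarith

lemma key_pos (c s r α y z : ℝ) (hr : r ^ 2 = 1 - α ^ 2) (hcge : r ≤ c)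
    (hr0 : 0 < r) (hs1 : -α ≤ s) (hs2 : s ≤ α) (hα0 : 0 ≤ α)
    (hyz : y ^ 2 + z ^ 2 = 1) (hy : α < y) : 0 < c * y + s * z := by
  have hc0 : 0 < c := lt_of_lt_of_le hr0 hcge
  have hy0 : 0 < y := lt_of_le_of_lt hα0 hy
  have hss : s ^ 2 ≤ α ^ 2 := by nlinarith
  have hcc : 1 - α ^ 2 ≤ c ^ 2 := by nlinarith
  have hyy : α ^ 2 < y ^ 2 := by nlinarith
  have hcy : (s * z) ^ 2 < (c * y) ^ 2 := by
    nlinarith [sq_nonneg z, sq_nonneg y]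
  nlinarith [hcy, mul_pos hc0 hy0, sq_nonneg (c * y + s * z)]

theorem version_space_2d (α : ℝ) (hα : α ∈ Set.Ico (0 : ℝ) 1)
    (φw : ℝ) (hφw : φw ∈ Set.Ioc (-Real.pi) Real.pi) :
    (∀ x : ℝ × ℝ, x.1 ^ 2 + x.2 ^ 2 = 1 → |x.1| > α →
        sgn (Real.cos φw * x.1 + Real.sin φw * x.2) = sgn x.1) ↔
      φw ∈ Set.Icc (-(Real.pi / 2 - Real.arccos α)) (Real.pi / 2 - Real.arccos α) := by
  obtain ⟨hα0, hα1⟩ := hα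
  obtain ⟨hφl, hφr⟩ := hφw
  have hpi := Real.pi_pos
  have harccos : Real.pi / 2 - Real.arccos α = Real.arcsin α := by
    rw [Real.arccos]; ring
  rw [harccos]
  have hA0 : 0 ≤ Real.arcsin α := Real.arcsin_nonneg.2 hα0
  have hA2 : Real.arcsin α < Real.pi / 2 := Real.arcsin_lt_pi_div_two.2 hα1
  have hsinA : Real.sin (Real.arcsin α) = α := Real.sin_arcsin (by linarith) hα1.le
  have hcosA : Real.cos (Real.arcsin α) = Real.sqrt (1 - α ^ 2) := Real.cos_arcsin α
  set A := Real.arcsin α with hAdef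
  constructor
  · intro h
    by_contra hc
    simp only [Set.mem_Icc, not_and_or, not_le] at hc
    rcases hc with hc | hc
    · -- φw < -A : use ψ = -φw ∈ (A, π), x = (sin t, cos t)
      obtain ⟨t, ht1, ht2⟩ := aux_phi α (-φw) hα0 hα1 (by linarith) (by linarith)
      have hx := h (Real.sin t, Real.cos t) (by
        simp [Real.sin_sq_add_cos_sq])
        (by
          simp only
          rw [abs_of_pos (by linarith)]
          exact ht1)
      have hinner : Real.cos φw * Real.sin t + Real.sin φw * Real.cos t
          = Real.sin (t - -φw) := by
        rw [Real.sin_sub, Real.sin_neg, Real.cos_neg]; ring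
      simp only at hx
      rw [hinner] at hx
      rw [sgn, sgn, if_neg (by linarith), if_pos (by linarith)] at hx
      norm_num at hx
    · -- A < φw : use ψ = φw, x = (sin t, -cos t)
      obtain ⟨t, ht1, ht2⟩ := aux_phi α φw hα0 hα1 hc hφr
      have hx := h (Real.sin t, -Real.cos t) (by
        simp [Real.sin_sq_add_cos_sq])
        (by
          simp only
          rw [abs_of_pos (by linarith)]
          exact ht1)
      have hinner : Real.cos φw * Real.sin t + Real.sin φw * -Real.cos t
          = Real.sin (t - φw) := by
        rw [Real.sin_sub]; ring
      simp only at hx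
      rw [hinner] at hx
      rw [sgn, sgn, if_neg (by linarith), if_pos (by linarith)] at hx
      norm_num at hx
  · rintro ⟨h1, h2⟩ x hx hx1
    have hmono := Real.strictMonoOn_sin.monotoneOn
    have hsle : Real.sin φw ≤ α := by
      calc Real.sin φw ≤ Real.sin A := hmono ⟨by linarith, by linarith⟩
            ⟨by linarith, hA2.le⟩ h2
        _ = α := hsinA
    have hsge : -α ≤ Real.sin φw := by
      calc -α = Real.sin (-A) := by rw [Real.sin_neg, hsinA]
        _ ≤ Real.sin φw := hmono ⟨by linarith, by linarith⟩
            ⟨by linarith, by linarith⟩ h1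
    have hcge : Real.sqrt (1 - α ^ 2) ≤ Real.cos φw := by
      rw [← Real.cos_abs φw, ← hcosA]
      exact Real.cos_le_cos_of_nonneg_of_le_pi (abs_nonneg _) (by linarith)
        (abs_le.2 ⟨by linarith, h2⟩)
    have hsq : Real.sqrt (1 - α ^ 2) ^ 2 = 1 - α ^ 2 :=
      Real.sq_sqrt (by nlinarith)
    have hsqpos : 0 < Real.sqrt (1 - α ^ 2) :=
      Real.sqrt_pos.2 (by nlinarith)
    have hkey : ∀ y z : ℝ, y ^ 2 + z ^ 2 = 1 → α < y →
        0 < Real.cos φw * y + Real.sin φw * z := fun y z hyz hy =>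
      key_pos _ _ _ _ _ _ hsq hcge hsqpos hsge hsle hα0 hyz hy
    rcases le_or_gt 0 x.1 with hx0 | hx0
    · have hxa : α < x.1 := by rwa [abs_of_nonneg hx0] at hx1
      have := hkey x.1 x.2 hx hxa
      rw [sgn, sgn, if_pos this.le, if_pos hx0]
    · have hxa : α < -x.1 := by rwa [abs_of_neg hx0] at hx1
      have := hkey (-x.1) (-x.2) (by nlinarith) hxa
      rw [sgn, sgn, if_neg (by nlinarith), if_neg (by linarith)]
end

section
/- Fix ψ ∈ (0, π/2) and d ≥ 3, let φ ∈ [ψ/2, π/2), and F(θ) = (1 - cos²φ/cos²θ)^((d-2)/2). If cos φ ≤ 1/(2 d^{1/4}), then (∫_0^{ψ/2} F(θ) dθ) / (∫_0^φ F(θ) dθ) ≤ 6 ψ (1 + d^{1/2} cos φ). -/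
open Real

private lemma aux_sqrt2 : (1:ℝ) < Real.sqrt 2 := by
  nlinarith [Real.sq_sqrt (by norm_num : (0:ℝ) ≤ 2), Real.sqrt_nonneg 2]

private lemma aux_base_nonneg {c y : ℝ} (hc : 0 < c) (h : c ≤ y) :
    0 ≤ 1 - c ^ 2 / y ^ 2 := by
  have hy : 0 < y := hc.trans_le h
  have h2 : c ^ 2 ≤ y ^ 2 := by nlinarith
  have h3 : c ^ 2 / y ^ 2 ≤ 1 := by rw [div_le_one (by positivity)]; exact h2
  linarith

private lemma aux_base_le {c y : ℝ} (hc : 0 < c) (h : c ≤ y) (h1 : y ^ 2 ≤ 1) :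
    1 - c ^ 2 / y ^ 2 ≤ 1 - c ^ 2 := by
  have hy : 0 < y := hc.trans_le h
  have h4 : (0:ℝ) < y ^ 2 := by positivity
  have h5 : c ^ 2 ≤ c ^ 2 / y ^ 2 := by
    rw [le_div_iff₀ h4]; nlinarith
  linarith

private lemma aux_cos_sq_bound {x t dv c : ℝ} (ht : 0 < t) (hx : x = 1 / (4 * (1 + t)))
    (ht2 : t ^ 2 = dv * c ^ 2) (hd : 0 < dv) (hc : 0 < c)
    (hsin : sin x ≤ x) (hsin0 : 0 ≤ sin x) :
    c ^ 2 / cos x ^ 2 ≤ c ^ 2 + 1 / dv := by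
  have hx0 : 0 < x := by rw [hx]; positivity
  have hpy : sin x ^ 2 + cos x ^ 2 = 1 := Real.sin_sq_add_cos_sq x
  have hx14 : x ≤ 1/4 := by
    rw [hx, div_le_div_iff₀ (by positivity) (by norm_num)]; linarith
  have hcx : 1 - x ^ 2 ≤ cos x ^ 2 := by nlinarith
  have hcx0 : 0 < cos x ^ 2 := by nlinarith
  rw [div_le_iff₀ hcx0]
  have hxx : (c ^ 2 + 1 / dv) * x ^ 2 ≤ 1 / dv := by
    have hxsq : x ^ 2 = 1 / (16 * (1 + t) ^ 2) := by
      rw [hx]; field_simp; ring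
    rw [hxsq, mul_one_div, div_le_div_iff₀ (by positivity) hd]
    have h1 : dv * c ^ 2 + 1 ≤ 16 * (1 + t) ^ 2 := by nlinarith
    have h2 : (c ^ 2 + 1 / dv) * dv = dv * c ^ 2 + 1 := by field_simp
    nlinarith
  nlinarith [sq_nonneg x, mul_pos hcx0 (by positivity : (0:ℝ) < c ^ 2 + 1 / dv)]

private lemma aux_ratio {a b dv m : ℝ} (hb : 1/2 ≤ b) (hab : a - b = 1/dv)
    (ha : 0 < a) (hd : 3 ≤ dv) (hm : m = (dv - 2)/2) :
    a ^ m ≤ 3 * b ^ m := by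
  have hd0 : (0:ℝ) < dv := by linarith
  have hb0 : (0:ℝ) < b := by linarith
  have hm0 : (0:ℝ) ≤ m := by rw [hm]; linarith
  have hdinv : (0:ℝ) < 1/dv := by positivity
  have hratio : a / b ≤ 1 + 2 / dv := by
    rw [div_le_iff₀ hb0]
    have h2 : 1 / dv ≤ 2 * b / dv := by
      apply div_le_div_of_nonneg_right _ hd0.le
      · linarith
    have h3 : (1 + 2 / dv) * b = b + 2 * b / dv := by ring
    linarith [h3 ▸ le_refl ((1 + 2 / dv) * b)]
  have hsplit : a ^ m = (a / b) ^ m * b ^ m := by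
    rw [← Real.mul_rpow (by positivity) hb0.le, div_mul_cancel₀ _ hb0.ne']
  have h3 : (a / b) ^ m ≤ 3 := by
    calc (a / b) ^ m ≤ (rexp (2 / dv)) ^ m := by
          apply Real.rpow_le_rpow (by positivity) _ hm0
          have := Real.add_one_le_exp (2 / dv)
          linarith
      _ = rexp (2 / dv * m) := by rw [← Real.exp_mul]
      _ ≤ rexp 1 := by
          apply Real.exp_le_exp.2
          rw [hm, div_mul_div_comm, div_le_one (by positivity)]
          nlinarith
      _ ≤ 3 := by linarith [Real.exp_one_lt_d9]
  rw [hsplit]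
  have hbm0 : 0 ≤ b ^ m := Real.rpow_nonneg hb0.le m
  calc (a / b) ^ m * b ^ m ≤ 3 * b ^ m := mul_le_mul_of_nonneg_right h3 hbm0

theorem boundary_certainty_upper_bound (ψ : ℝ) (hψ : ψ ∈ Set.Ioo 0 (π/2))
    (d : ℕ) (hd : 3 ≤ d) (φ : ℝ) (hφ : φ ∈ Set.Ico (ψ/2) (π/2))
    (hcos : cos φ ≤ 1 / (2 * (d : ℝ) ^ ((1:ℝ)/4))) :
    (∫ θ in (0:ℝ)..(ψ/2), (1 - cos φ ^ 2 / cos θ ^ 2) ^ (((d:ℝ) - 2) / 2)) /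
      (∫ θ in (0:ℝ)..φ, (1 - cos φ ^ 2 / cos θ ^ 2) ^ (((d:ℝ) - 2) / 2)) ≤
      6 * ψ * (1 + (d : ℝ) ^ ((1:ℝ)/2) * cos φ) := by
  obtain ⟨hψ0, hψπ⟩ := hψ
  obtain ⟨hφ1, hφ2⟩ := hφ
  have hπ : (3.14159 : ℝ) < π := by
    have := Real.pi_gt_d6; linarith
  set c := cos φ with hc
  set m : ℝ := ((d:ℝ) - 2) / 2 with hm
  set F : ℝ → ℝ := fun θ => (1 - c ^ 2 / cos θ ^ 2) ^ m with hF
  clear_value F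
  have hd3 : (3:ℝ) ≤ (d:ℝ) := by exact_mod_cast hd
  have hd0 : (0:ℝ) < (d:ℝ) := by linarith
  have hm0 : (0:ℝ) ≤ m := by rw [hm]; linarith
  have hφ0 : 0 < φ := lt_of_lt_of_le (by linarith) hφ1
  have hφpi : φ ≤ π := by linarith
  have hψ20 : (0:ℝ) ≤ ψ/2 := by linarith
  have hc0 : 0 < c := Real.cos_pos_of_mem_Ioo ⟨by linarith, hφ2⟩
  -- s = d^(1/2)
  set s : ℝ := (d:ℝ) ^ ((1:ℝ)/2) with hs
  have hs2 : s ^ 2 = (d:ℝ) := by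
    rw [hs, ← Real.rpow_natCast ((d:ℝ) ^ ((1:ℝ)/2)) 2, ← Real.rpow_mul (by positivity)]
    norm_num
  have hs0 : 0 < s := Real.rpow_pos_of_pos hd0 _
  clear_value s
  have hs32 : (3:ℝ)/2 ≤ s := by nlinarith [hs2, hs0, hd3]
  -- quarter power
  have hq2 : ((d:ℝ) ^ ((1:ℝ)/4)) ^ 2 = s := by
    rw [hs, ← Real.rpow_natCast ((d:ℝ) ^ ((1:ℝ)/4)) 2, ← Real.rpow_mul (by positivity)]
    norm_num
  clear hs
  have hq0 : 0 < (d:ℝ) ^ ((1:ℝ)/4) := Real.rpow_pos_of_pos hd0 _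
  have hq1 : 1 ≤ (d:ℝ) ^ ((1:ℝ)/4) := Real.one_le_rpow (by linarith : (1:ℝ) ≤ (d:ℝ)) (by norm_num)
  -- c ≤ 1/2 and c^2 ≤ 1/(4s)
  have hc12 : c ≤ 1/2 := by
    refine hcos.trans ?_
    rw [div_le_div_iff₀ (by positivity) (by norm_num)]
    linarith
  have hc2s : c ^ 2 ≤ 1 / (4 * s) := by
    have h1 : c ^ 2 ≤ (1 / (2 * (d:ℝ) ^ ((1:ℝ)/4))) ^ 2 := by
      apply pow_le_pow_left₀ hc0.le hcos
    calc c ^ 2 ≤ (1 / (2 * (d:ℝ) ^ ((1:ℝ)/4))) ^ 2 := h1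
      _ = 1 / (4 * s) := by rw [div_pow, mul_pow, hq2]; norm_num
  have hc26 : c ^ 2 ≤ 1/6 := by
    have h1 : 1 / (4 * s) ≤ 1/6 := by
      rw [div_le_div_iff₀ (by positivity) (by norm_num)]
      linarith
    linarith
  clear hc2s hq2 hq0 hq1 hcos
  clear_value c m
  -- b := 1 - c^2 - 1/d ≥ 1/2
  have hdinv : (1:ℝ)/(d:ℝ) ≤ 1/3 := by
    rw [div_le_div_iff₀ hd0 (by norm_num)]; linarith
  set b : ℝ := 1 - c ^ 2 - 1/(d:ℝ) with hb
  clear_value b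
  have hb12 : (1:ℝ)/2 ≤ b := by rw [hb]; linarith
  have hb0 : 0 < b := lt_of_lt_of_le one_half_pos hb12
  -- t and θ'
  set t : ℝ := s * c with ht
  have ht0 : 0 < t := by positivity
  have ht2 : t ^ 2 = (d:ℝ) * c ^ 2 := by
    rw [ht, mul_pow, hs2]
  clear_value t
  set x : ℝ := 1 / (4 * (1 + t)) with hx
  clear_value x
  have hx0 : 0 < x := by rw [hx]; positivity
  have hx14 : x ≤ 1/4 := by
    rw [hx, div_le_div_iff₀ (by positivity) (by norm_num)]
    linarith
  have hxpi : x ≤ π := by linarith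
  have hxm : -(π/2) < x := by linarith
  have hxpi2 : x < π/2 := by linarith
  have ha0 : (0:ℝ) < 1 - c ^ 2 := by linarith
  have h6ψt : (0:ℝ) ≤ 6 * ψ * (1 + t) := mul_nonneg (by linarith) (by linarith)
  have hxφ : x ≤ φ := by
    have h4 : π/4 < φ := by
      by_contra h
      push_neg at h
      have h5 := Real.cos_le_cos_of_nonneg_of_le_pi hφ0.le (by linarith) h
      rw [Real.cos_pi_div_four] at h5
      have h2 : (1:ℝ) < Real.sqrt 2 := aux_sqrt2
      rw [← hc] at h5
      linarith
    linarith
  -- cos bounds on [0, φ]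
  have hcosθ : ∀ θ ∈ Set.Icc (0:ℝ) φ, c ≤ cos θ := by
    intro θ hθ
    rw [hc]
    exact Real.cos_le_cos_of_nonneg_of_le_pi hθ.1 hφpi hθ.2
  -- continuity / integrability
  have hcont : ContinuousOn F (Set.Icc 0 φ) := by
    rw [hF]
    apply ContinuousOn.rpow_const
    · apply ContinuousOn.sub continuousOn_const
      apply ContinuousOn.div continuousOn_const
      · exact (Real.continuous_cos.pow 2).continuousOn
      · intro θ hθ
        have h1 := hcosθ θ hθ
        have h2 : 0 < cos θ := lt_of_lt_of_le hc0 h1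
        positivity
    · intro θ hθ
      exact Or.inr hm0
  have hsub : ∀ y : ℝ, 0 ≤ y → y ≤ φ → IntervalIntegrable F MeasureTheory.volume 0 y := by
    intro y hy0 hyφ
    apply ContinuousOn.intervalIntegrable
    apply hcont.mono
    rw [Set.uIcc_of_le hy0]
    exact Set.Icc_subset_Icc_right hyφ
  have hIψ : IntervalIntegrable F MeasureTheory.volume 0 (ψ/2) := hsub _ hψ20 hφ1
  have hIx : IntervalIntegrable F MeasureTheory.volume 0 x := hsub _ hx0.le hxφ
  have hIxφ : IntervalIntegrable F MeasureTheory.volume x φ := by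
    apply ContinuousOn.intervalIntegrable
    apply hcont.mono
    rw [Set.uIcc_of_le hxφ]
    exact Set.Icc_subset_Icc hx0.le (le_refl _)
  -- nonnegativity of F
  have hFnn : ∀ θ ∈ Set.Icc (0:ℝ) φ, 0 ≤ F θ := by
    intro θ hθ
    rw [hF]
    exact Real.rpow_nonneg (aux_base_nonneg hc0 (hcosθ θ hθ)) m
  -- numerator bound
  have hNum : (∫ θ in (0:ℝ)..(ψ/2), F θ) ≤ (ψ/2) * (1 - c ^ 2) ^ m := by
    have h1 : (∫ θ in (0:ℝ)..(ψ/2), F θ) ≤ ∫ _ in (0:ℝ)..(ψ/2), (1 - c ^ 2) ^ m := by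
      apply intervalIntegral.integral_mono_on hψ20 hIψ intervalIntegrable_const
      intro θ hθ
      have hθ' : θ ∈ Set.Icc (0:ℝ) φ := ⟨hθ.1, hθ.2.trans hφ1⟩
      rw [hF]
      apply Real.rpow_le_rpow (aux_base_nonneg hc0 (hcosθ θ hθ')) _ hm0
      apply aux_base_le hc0 (hcosθ θ hθ')
      exact Real.cos_sq_le_one θ
    rw [intervalIntegral.integral_const, smul_eq_mul, sub_zero] at h1
    exact h1
  -- lower bound of F on [0, x]
  have hcosx : c ^ 2 / cos x ^ 2 ≤ c ^ 2 + 1/(d:ℝ) :=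
    aux_cos_sq_bound ht0 hx ht2 hd0 hc0 (Real.sin_le hx0.le)
      (Real.sin_nonneg_of_nonneg_of_le_pi hx0.le hxpi)
  have hFlow : ∀ θ ∈ Set.Icc (0:ℝ) x, b ^ m ≤ F θ := by
    intro θ hθ
    rw [hF]
    apply Real.rpow_le_rpow hb0.le _ hm0
    have h1 : cos x ≤ cos θ := Real.cos_le_cos_of_nonneg_of_le_pi hθ.1 hxpi hθ.2
    have h2 : 0 < cos x := Real.cos_pos_of_mem_Ioo ⟨hxm, hxpi2⟩
    have h3 : c ^ 2 / cos θ ^ 2 ≤ c ^ 2 / cos x ^ 2 := by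
      apply div_le_div_of_nonneg_left (by positivity) (by positivity)
      exact pow_le_pow_left₀ h2.le h1 2
    rw [hb]
    linarith
  -- denominator lower bound
  have hDen : x * b ^ m ≤ ∫ θ in (0:ℝ)..φ, F θ := by
    have hsplit : (∫ θ in (0:ℝ)..x, F θ) + (∫ θ in x..φ, F θ) = ∫ θ in (0:ℝ)..φ, F θ :=
      intervalIntegral.integral_add_adjacent_intervals hIx hIxφ
    have h1 : x * b ^ m ≤ ∫ θ in (0:ℝ)..x, F θ := by
      have h2 := intervalIntegral.integral_mono_on hx0.le
        (intervalIntegrable_const :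
          IntervalIntegrable (fun _ => b ^ m) MeasureTheory.volume 0 x) hIx hFlow
      rw [intervalIntegral.integral_const, smul_eq_mul, sub_zero] at h2
      exact h2
    have h2 : 0 ≤ ∫ θ in x..φ, F θ := by
      apply intervalIntegral.integral_nonneg hxφ
      intro u hu
      exact hFnn u ⟨le_trans hx0.le hu.1, hu.2⟩
    linarith
  have hbm0 : 0 < b ^ m := Real.rpow_pos_of_pos hb0 _
  have hD0 : 0 < ∫ θ in (0:ℝ)..φ, F θ := lt_of_lt_of_le (mul_pos hx0 hbm0) hDen
  -- comparison (1-c^2)^m ≤ 3 * b^m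
  have hab : (1 - c ^ 2) ^ m ≤ 3 * b ^ m := by
    apply aux_ratio hb12 _ ha0 hd3 hm
    rw [hb]; ring
  -- finish
  rw [div_le_iff₀ hD0]
  calc (∫ θ in (0:ℝ)..(ψ/2), F θ) ≤ (ψ/2) * (1 - c ^ 2) ^ m := hNum
    _ ≤ (ψ/2) * (3 * b ^ m) := mul_le_mul_of_nonneg_left hab hψ20
    _ = 6 * ψ * (1 + t) * (x * b ^ m) := by rw [hx]; field_simp; ring
    _ ≤ 6 * ψ * (1 + t) * ∫ θ in (0:ℝ)..φ, F θ := by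
        apply mul_le_mul_of_nonneg_left hDen h6ψt
end

section
/- For ψ ∈ (0, π/2) and c₄ ∈ (0, 1/4], one has 1/cos²(ψ/2) - 1/cos²(c₄ψ) ≥ ψ²/(8π). -/
open Real

theorem cos_sq_inv_diff (ψ c₄ : ℝ) (hψ : ψ ∈ Set.Ioo 0 (π/2))
    (hc₄ : c₄ ∈ Set.Ioc 0 (1/4 : ℝ)) :
    1 / cos (ψ/2) ^ 2 - 1 / cos (c₄ * ψ) ^ 2 ≥ ψ ^ 2 / (8 * π) := by
  obtain ⟨hψ0, hψπ⟩ := hψ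
  obtain ⟨hc0, hc4⟩ := hc₄
  have hπ : (3 : ℝ) < π := Real.pi_gt_three
  have ha0 : 0 < ψ/2 := by linarith
  have haπ : ψ/2 < π/2 := by linarith
  have hb0 : 0 < c₄ * ψ := by positivity
  have hba : c₄ * ψ ≤ ψ/4 := by nlinarith
  have hbπ4 : c₄ * ψ ≤ π/4 := by linarith
  have hcosa : Real.cos (ψ/2) ≠ 0 :=
    (Real.cos_pos_of_mem_Ioo ⟨by linarith, haπ⟩).ne'
  have hcosb_pos : 0 < Real.cos (c₄ * ψ) :=
    Real.cos_pos_of_mem_Ioo ⟨by linarith, by linarith⟩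
  -- cos b ≥ √2 / 2
  have hcosb : Real.sqrt 2 / 2 ≤ Real.cos (c₄ * ψ) := by
    rw [← Real.cos_pi_div_four]
    exact Real.cos_le_cos_of_nonneg_of_le_pi hb0.le (by linarith) hbπ4
  -- tan a ≥ a
  have hta : ψ/2 ≤ Real.tan (ψ/2) := (Real.lt_tan ha0 haπ).le
  have hta0 : 0 ≤ Real.tan (ψ/2) := le_trans ha0.le hta
  -- tan b ≤ √2 * b
  have hsinb : Real.sin (c₄ * ψ) ≤ c₄ * ψ := Real.sin_le hb0.le
  have hsqrt2 : (0:ℝ) < Real.sqrt 2 := by positivity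
  have hsq2 : Real.sqrt 2 ^ 2 = 2 := Real.sq_sqrt (by norm_num)
  have htb : Real.tan (c₄ * ψ) ≤ Real.sqrt 2 * (c₄ * ψ) := by
    rw [Real.tan_eq_sin_div_cos, div_le_iff₀ hcosb_pos]
    nlinarith [mul_le_mul_of_nonneg_left hcosb (mul_nonneg hsqrt2.le hb0.le)]
  have htb0 : 0 ≤ Real.tan (c₄ * ψ) := by
    rw [Real.tan_eq_sin_div_cos]
    exact div_nonneg (Real.sin_nonneg_of_nonneg_of_le_pi hb0.le (by linarith)) hcosb_pos.le
  have key1 : 1 / Real.cos (ψ/2) ^ 2 = 1 + Real.tan (ψ/2) ^ 2 := by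
    rw [one_div, ← Real.inv_one_add_tan_sq hcosa, inv_inv]
  have key2 : 1 / Real.cos (c₄ * ψ) ^ 2 = 1 + Real.tan (c₄ * ψ) ^ 2 := by
    rw [one_div, ← Real.inv_one_add_tan_sq hcosb_pos.ne', inv_inv]
  rw [key1, key2, ge_iff_le, div_le_iff₀ (by linarith)]
  have h1 : (ψ/2)^2 ≤ Real.tan (ψ/2) ^ 2 := by nlinarith
  have h2 : Real.tan (c₄ * ψ) ^ 2 ≤ 2 * (ψ/4)^2 := by
    have hb2 : (c₄ * ψ)^2 ≤ (ψ/4)^2 := pow_le_pow_left₀ hb0.le hba 2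
    nlinarith [mul_le_mul htb htb htb0 (mul_nonneg hsqrt2.le hb0.le)]
  nlinarith [sq_nonneg ψ]
end
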